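/- Under the extremal dynamics for two identical coupled spins with optimal feedback, the Hamiltonian H = (μ²/2)‖P₁×S₁ + P₂×S₂‖² + (1/2)((P₁-P₂)·(S₁×S₂))² is conserved. -/

import Mathlib

/-!
Put `M = P₁ × S₁ + P₂ × S₂`, `D = P₁ - P₂` and `C = S₁ × S₂`, so that `κ = D ⬝ C`. By the Jacobi
identity the coupling terms cancel in `M'`, leaving `M' = M × μB`: `M` only rotates, so `‖M‖` is
constant. Likewise `D' = D × W` and `C' = C × W` with the common angular velocity
`W = μB + κ (S₁ + S₂)`, and a dot product of two vectors rotating together is constant, so `κ` is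
constant as well.
-/

open Matrix

/-- Euclidean norm on `ℝ³` (as `Fin 3 → ℝ`). -/
noncomputable def enorm3 (v : Fin 3 → ℝ) : ℝ := Real.sqrt (v ⬝ᵥ v)

section CrossProduct

variable {R : Type*} [CommRing R]

theorem cross_cross_add_cross_cross (u v w : Fin 3 → R) :
    (u ⨯₃ w) ⨯₃ v + u ⨯₃ (v ⨯₃ w) = (u ⨯₃ v) ⨯₃ w := by
  rw [leibniz_cross, ← cross_anticomm (u ⨯₃ w) v]
  abel

theorem cross_dotProduct_add_dotProduct_cross (u v w : Fin 3 → R) :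
    (u ⨯₃ w) ⬝ᵥ v + u ⬝ᵥ (v ⨯₃ w) = 0 := by
  rw [dotProduct_comm, triple_product_permutation, ← cross_anticomm, dotProduct_neg]
  exact neg_add_cancel _

/-- The Jacobi identity for `p₁ - p₂`, `s₁`, `s₂`, in disguise. -/
theorem sub_cross_cross_add_cross_cross_eq_zero (p₁ p₂ s₁ s₂ : Fin 3 → R) :
    ((p₁ - p₂) ⨯₃ s₂) ⨯₃ s₁ + p₁ ⨯₃ (s₁ ⨯₃ s₂)
      + (((p₂ - p₁) ⨯₃ s₁) ⨯₃ s₂ + p₂ ⨯₃ (s₂ ⨯₃ s₁)) = 0 := by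
  ext i
  fin_cases i <;> simp [cross_apply] <;> ring

end CrossProduct

section Calculus

variable {𝕜 : Type*} [NontriviallyNormedField 𝕜] [CompleteSpace 𝕜]

theorem LinearMap.hasDerivAt_of_bilinear {E F G : Type*}
    [NormedAddCommGroup E] [NormedSpace 𝕜 E] [FiniteDimensional 𝕜 E]
    [NormedAddCommGroup F] [NormedSpace 𝕜 F] [FiniteDimensional 𝕜 F]
    [NormedAddCommGroup G] [NormedSpace 𝕜 G]
    (β : E →ₗ[𝕜] F →ₗ[𝕜] G) {u : 𝕜 → E} {v : 𝕜 → F} {u' : E} {v' : F} {x : 𝕜}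
    (hu : HasDerivAt u u' x) (hv : HasDerivAt v v' x) :
    HasDerivAt (fun x ↦ β (u x) (v x)) (β (u x) v' + β u' (v x)) x :=
  (LinearMap.toContinuousLinearMap (LinearMap.toContinuousLinearMap.toLinearMap ∘ₗ β)
    ).hasDerivAt_of_bilinear (fun _ ↦ hu) (fun _ ↦ hv)

variable {f g : 𝕜 → Fin 3 → 𝕜} {f' g' : Fin 3 → 𝕜} {x : 𝕜}

theorem HasDerivAt.cross (hf : HasDerivAt f f' x) (hg : HasDerivAt g g' x) :
    HasDerivAt (fun x ↦ f x ⨯₃ g x) (f' ⨯₃ g x + f x ⨯₃ g') x := by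
  simpa only [add_comm] using crossProduct.hasDerivAt_of_bilinear hf hg

theorem HasDerivAt.dotProduct {n : Type*} [Fintype n] {f g : 𝕜 → n → 𝕜} {f' g' : n → 𝕜}
    (hf : HasDerivAt f f' x) (hg : HasDerivAt g g' x) :
    HasDerivAt (fun x ↦ f x ⬝ᵥ g x) (f' ⬝ᵥ g x + f x ⬝ᵥ g') x := by
  rw [add_comm]
  exact (dotProductBilin 𝕜 𝕜).hasDerivAt_of_bilinear hf hg

theorem HasDerivAt.cross_of_rotating {w a b : Fin 3 → 𝕜}
    (hf : HasDerivAt f (f x ⨯₃ w + a) x) (hg : HasDerivAt g (g x ⨯₃ w + b) x) :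
    HasDerivAt (fun x ↦ f x ⨯₃ g x) ((f x ⨯₃ g x) ⨯₃ w + (a ⨯₃ g x + f x ⨯₃ b)) x := by
  refine (hf.cross hg).congr_deriv ?_
  rw [← cross_cross_add_cross_cross, map_add, map_add, LinearMap.add_apply]
  abel

theorem HasDerivAt.dotProduct_of_rotating {w : Fin 3 → 𝕜}
    (hf : HasDerivAt f (f x ⨯₃ w) x) (hg : HasDerivAt g (g x ⨯₃ w) x) :
    HasDerivAt (fun x ↦ f x ⬝ᵥ g x) 0 x := by
  simpa only [cross_dotProduct_add_dotProduct_cross] using hf.dotProduct hg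

end Calculus

section CoupledSpins

variable {𝕜 : Type*} [NontriviallyNormedField 𝕜] [CompleteSpace 𝕜]
  {S₁ S₂ P₁ P₂ : 𝕜 → Fin 3 → 𝕜} {b : Fin 3 → 𝕜} {μ k t : 𝕜}

theorem hasDerivAt_cross_add_cross
    (hS₁ : HasDerivAt S₁ (μ • S₁ t ⨯₃ b + k • S₁ t ⨯₃ S₂ t) t)
    (hS₂ : HasDerivAt S₂ (μ • S₂ t ⨯₃ b + k • S₂ t ⨯₃ S₁ t) t)
    (hP₁ : HasDerivAt P₁ (μ • P₁ t ⨯₃ b + k • (P₁ t - P₂ t) ⨯₃ S₂ t) t)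
    (hP₂ : HasDerivAt P₂ (μ • P₂ t ⨯₃ b + k • (P₂ t - P₁ t) ⨯₃ S₁ t) t) :
    HasDerivAt (fun t ↦ P₁ t ⨯₃ S₁ t + P₂ t ⨯₃ S₂ t)
      ((P₁ t ⨯₃ S₁ t + P₂ t ⨯₃ S₂ t) ⨯₃ (μ • b)) t := by
  rw [← map_smul (crossProduct (S₁ t))] at hS₁
  rw [← map_smul (crossProduct (S₂ t))] at hS₂
  rw [← map_smul (crossProduct (P₁ t))] at hP₁
  rw [← map_smul (crossProduct (P₂ t))] at hP₂
  refine ((hP₁.cross_of_rotating hS₁).add (hP₂.cross_of_rotating hS₂)).congr_deriv ?_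
  have h := sub_cross_cross_add_cross_cross_eq_zero (P₁ t) (P₂ t) (S₁ t) (S₂ t)
  simp only [map_smul, map_add, LinearMap.smul_apply, LinearMap.add_apply]
  linear_combination (norm := module) k • h

theorem hasDerivAt_sub_dotProduct_cross
    (hS₁ : HasDerivAt S₁ (μ • S₁ t ⨯₃ b + k • S₁ t ⨯₃ S₂ t) t)
    (hS₂ : HasDerivAt S₂ (μ • S₂ t ⨯₃ b + k • S₂ t ⨯₃ S₁ t) t)
    (hP₁ : HasDerivAt P₁ (μ • P₁ t ⨯₃ b + k • (P₁ t - P₂ t) ⨯₃ S₂ t) t)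
    (hP₂ : HasDerivAt P₂ (μ • P₂ t ⨯₃ b + k • (P₂ t - P₁ t) ⨯₃ S₁ t) t) :
    HasDerivAt (fun t ↦ (P₁ t - P₂ t) ⬝ᵥ S₁ t ⨯₃ S₂ t) 0 t := by
  set w := μ • b + k • (S₁ t + S₂ t)
  have hD : HasDerivAt (fun t ↦ P₁ t - P₂ t) ((P₁ t - P₂ t) ⨯₃ w) t := by
    refine (hP₁.sub hP₂).congr_deriv ?_
    simp only [w, map_add, map_sub, map_smul, LinearMap.sub_apply]
    module
  have hC : HasDerivAt (fun t ↦ S₁ t ⨯₃ S₂ t) ((S₁ t ⨯₃ S₂ t) ⨯₃ w) t := by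
    rw [← map_smul (crossProduct (S₁ t))] at hS₁
    rw [← map_smul (crossProduct (S₂ t))] at hS₂
    refine (hS₁.cross_of_rotating hS₂).congr_deriv ?_
    rw [← cross_anticomm (S₁ t) (S₂ t)]
    simp only [w, map_add, map_smul, map_neg, LinearMap.smul_apply]
    rw [← cross_anticomm (S₁ t ⨯₃ S₂ t) (S₁ t)]
    module
  exact hD.dotProduct_of_rotating hC

end CoupledSpins

theorem enorm3_sq (v : Fin 3 → ℝ) : enorm3 v ^ 2 = v ⬝ᵥ v :=
  Real.sq_sqrt (by simpa using dotProduct_star_self_nonneg v)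

theorem extremal_coupled_hamiltonian_conserved_general (μ : ℝ)
    (S₁ S₂ P₁ P₂ : ℝ → Fin 3 → ℝ) (B : ℝ → Fin 3 → ℝ) (κ : ℝ → ℝ)
    (hκ : ∀ t : ℝ, κ t = (P₁ t - P₂ t) ⬝ᵥ crossProduct (S₁ t) (S₂ t))
    (hS₁ : ∀ t : ℝ, HasDerivAt S₁
      (μ • crossProduct (S₁ t) (B t) + κ t • crossProduct (S₁ t) (S₂ t)) t)
    (hS₂ : ∀ t : ℝ, HasDerivAt S₂
      (μ • crossProduct (S₂ t) (B t) + κ t • crossProduct (S₂ t) (S₁ t)) t)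
    (hP₁ : ∀ t : ℝ, HasDerivAt P₁
      (μ • crossProduct (P₁ t) (B t) + κ t • crossProduct (P₁ t - P₂ t) (S₂ t)) t)
    (hP₂ : ∀ t : ℝ, HasDerivAt P₂
      (μ • crossProduct (P₂ t) (B t) + κ t • crossProduct (P₂ t - P₁ t) (S₁ t)) t) :
    ∀ t : ℝ,
      μ ^ 2 / 2 * enorm3 (crossProduct (P₁ t) (S₁ t) + crossProduct (P₂ t) (S₂ t)) ^ 2
          + 1 / 2 * κ t ^ 2 =
        μ ^ 2 / 2 * enorm3 (crossProduct (P₁ 0) (S₁ 0) + crossProduct (P₂ 0) (S₂ 0)) ^ 2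
          + 1 / 2 * κ 0 ^ 2 := by
  set M : ℝ → Fin 3 → ℝ := fun t ↦ P₁ t ⨯₃ S₁ t + P₂ t ⨯₃ S₂ t
  have hM (t : ℝ) : HasDerivAt M (M t ⨯₃ (μ • B t)) t :=
    hasDerivAt_cross_add_cross (hS₁ t) (hS₂ t) (hP₁ t) (hP₂ t)
  have hκ' (t : ℝ) : HasDerivAt κ 0 t := by
    rw [funext hκ]
    exact hasDerivAt_sub_dotProduct_cross (hS₁ t) (hS₂ t) (hP₁ t) (hP₂ t)
  have hH (t : ℝ) : HasDerivAt (fun t ↦ μ ^ 2 / 2 * (M t ⬝ᵥ M t) + 1 / 2 * κ t ^ 2) 0 t := by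
    refine ((((hM t).dotProduct_of_rotating (hM t)).const_mul (μ ^ 2 / 2)).add
      (((hκ' t).pow 2).const_mul (1 / 2))).congr_deriv ?_
    simp
  intro t
  simp only [enorm3_sq]
  exact is_const_of_deriv_eq_zero (fun t ↦ (hH t).differentiableAt) (fun t ↦ (hH t).deriv) t 0

theorem extremal_coupled_hamiltonian_conserved (μ : ℝ)
    (S₁ S₂ P₁ P₂ : ℝ → Fin 3 → ℝ) (B : ℝ → Fin 3 → ℝ) (κ : ℝ → ℝ)
    (hB : ∀ t : ℝ, B t = μ • (crossProduct (P₁ t) (S₁ t) + crossProduct (P₂ t) (S₂ t)))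
    (hκ : ∀ t : ℝ, κ t = (P₁ t - P₂ t) ⬝ᵥ crossProduct (S₁ t) (S₂ t))
    (hS₁ : ∀ t : ℝ, HasDerivAt S₁
      (μ • crossProduct (S₁ t) (B t) + κ t • crossProduct (S₁ t) (S₂ t)) t)
    (hS₂ : ∀ t : ℝ, HasDerivAt S₂
      (μ • crossProduct (S₂ t) (B t) + κ t • crossProduct (S₂ t) (S₁ t)) t)
    (hP₁ : ∀ t : ℝ, HasDerivAt P₁
      (μ • crossProduct (P₁ t) (B t) + κ t • crossProduct (P₁ t - P₂ t) (S₂ t)) t)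
    (hP₂ : ∀ t : ℝ, HasDerivAt P₂
      (μ • crossProduct (P₂ t) (B t) + κ t • crossProduct (P₂ t - P₁ t) (S₁ t)) t)
    (hc₁ : ∀ t : ℝ, S₁ t ⬝ᵥ P₁ t = 0) (hc₂ : ∀ t : ℝ, S₂ t ⬝ᵥ P₂ t = 0) :
    ∀ t : ℝ,
      μ ^ 2 / 2 * enorm3 (crossProduct (P₁ t) (S₁ t) + crossProduct (P₂ t) (S₂ t)) ^ 2
          + 1 / 2 * κ t ^ 2 =
        μ ^ 2 / 2 * enorm3 (crossProduct (P₁ 0) (S₁ 0) + crossProduct (P₂ 0) (S₂ 0)) ^ 2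
          + 1 / 2 * κ 0 ^ 2 :=
  extremal_coupled_hamiltonian_conserved_general μ S₁ S₂ P₁ P₂ B κ hκ hS₁ hS₂ hP₁ hP₂
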